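/- arXiv:0801.3079 — 2 statements merged into one kernel-verified Lean document; each statement's English description precedes it below -/
import Mathlib

section
/- Let 1 ≤ d < n_1, let D be a d-subregular subset with D ⊇ D_1(d), and let φ, φ̃: D → F_q^* be maps that agree on D ∖ {(n−d,d),(n−d+1,d+1)} and satisfy φ(d+1,d)·φ(n−d+1,d+1) + φ(n−d,d)·φ(n−d+1,n−d) = φ̃(d+1,d)·φ̃(n−d+1,d+1) + φ̃(n−d,d)·φ̃(n−d+1,n−d), where φ(i,j) and φ̃(i,j) are read as 0 for (i,j) ∉ D. Then K_D(φ) = K_D(φ̃). Moreover, for every canonical form f = (ξ_{ij}) of a d-subregular orbit such that ξ_{d,n−d}·φ(d+1,d) = ξ_{d+1,n−d+1}·φ(n−d+1,n−d), one also has θ_f(e_D(φ)) = θ_f(e_D(φ̃)). -/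
open Matrix

namespace UT

variable {F : Type}

/-- `g` is a lower unitriangular matrix (an element of `G_n`). -/
def IsUT [CommRing F] {n : ℕ} (g : Matrix (Fin n) (Fin n) F) : Prop :=
  (∀ i, g i i = 1) ∧ ∀ i j, i < j → g i j = 0

/-- `a` is strictly lower triangular (an element of `g_n`). -/
def IsSL [CommRing F] {n : ℕ} (a : Matrix (Fin n) (Fin n) F) : Prop :=
  ∀ i j, i ≤ j → a i j = 0

/-- `f` is strictly upper triangular (an element of `g_n^*`). -/
def IsSU [CommRing F] {n : ℕ} (f : Matrix (Fin n) (Fin n) F) : Prop :=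
  ∀ i j, j ≤ i → f i j = 0

/-- The `(i,j)` entry of a matrix, in 1-based indexing. -/
def ent [CommRing F] {n : ℕ} (g : Matrix (Fin n) (Fin n) F) (i j : ℕ) : F :=
  if h : i - 1 < n ∧ j - 1 < n then g ⟨i - 1, h.1⟩ ⟨j - 1, h.2⟩ else 0

/-- `μ(n) = (n-2) + (n-4) + ⋯` (truncated subtraction cuts the sum off). -/
def mun (n : ℕ) : ℕ := ∑ k ∈ Finset.Icc 1 n, (n - 2 * k)

/-- The set of roots `Φ(n) = {(i,j) : 1 ≤ j < i ≤ n}`. -/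
def Phi (n : ℕ) : Finset (ℕ × ℕ) :=
  (Finset.Icc 1 n ×ˢ Finset.Icc 1 n).filter fun r => r.2 < r.1

/-- A basic subset: at most one root in each row and each column. -/
def IsBasic (n : ℕ) (D : Finset (ℕ × ℕ)) : Prop :=
  D ⊆ Phi n ∧ ∀ r ∈ D, ∀ s ∈ D, r ≠ s → r.1 ≠ s.1 ∧ r.2 ≠ s.2

/-- A regular subset: every root has the form `(n-j+1, j)`. -/
def IsRegularSet (n : ℕ) (D : Finset (ℕ × ℕ)) : Prop :=
  D ⊆ Phi n ∧ ∀ r ∈ D, r.1 = n - r.2 + 1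

/-- The set `R(D)` of `D`-regular roots. -/
def RD (n : ℕ) (D : Finset (ℕ × ℕ)) : Finset (ℕ × ℕ) :=
  (Phi n).filter fun r => ∀ k < r.1, r.2 < k → (r.1, k) ∉ D ∧ (k, r.2) ∉ D

/-- `Φ_reg = {(i,j) ∈ Φ(n) : i > n - j + 1}`. -/
def PhiReg (n : ℕ) : Finset (ℕ × ℕ) := (Phi n).filter fun r => n - r.2 + 1 < r.1

/-- The element `x_D(φ) = 1 + ∑_{(i,j) ∈ D} φ(i,j) e_{ij}`. -/
def xD [CommRing F] (n : ℕ) (D : Finset (ℕ × ℕ)) (φ : ℕ × ℕ → F) :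
    Matrix (Fin n) (Fin n) F :=
  Matrix.of fun a b =>
    if a = b then 1
    else if (a.1 + 1, b.1 + 1) ∈ D then φ (a.1 + 1, b.1 + 1) else 0

/-- `e_D(φ) = x_D(φ) - 1`. -/
def eD [CommRing F] (n : ℕ) (D : Finset (ℕ × ℕ)) (φ : ℕ × ℕ → F) :
    Matrix (Fin n) (Fin n) F := xD n D φ - 1

/-- The conjugacy class `K_D(φ)` of `x_D(φ)` in `G_n`. -/
def KD (F : Type) [Field F] (n : ℕ) (D : Finset (ℕ × ℕ)) (φ : ℕ × ℕ → F) :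
    Set (Matrix (Fin n) (Fin n) F) :=
  {g | IsUT g ∧ ∃ h, IsUT h ∧ g = h * xD n D φ * h⁻¹}

/-- The strictly upper-triangular part of a matrix. -/
def upperPart [CommRing F] {n : ℕ} (M : Matrix (Fin n) (Fin n) F) :
    Matrix (Fin n) (Fin n) F :=
  Matrix.of fun i j => if i < j then M i j else 0

/-- The coadjoint action: `K(g)f` is the unique strictly upper-triangular matrix with
`tr((K(g)f)·x) = tr(f·(g⁻¹·x·g))` for all strictly lower-triangular `x`, namely the strictly
upper part of `g·f·g⁻¹`. -/
noncomputable def coadj [Field F] {n : ℕ} (g f : Matrix (Fin n) (Fin n) F) :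
    Matrix (Fin n) (Fin n) F :=
  upperPart (g * f * g⁻¹)

/-- The coadjoint orbit of `f`. -/
def coadjOrbit (F : Type) [Field F] (n : ℕ) (f : Matrix (Fin n) (Fin n) F) :
    Set (Matrix (Fin n) (Fin n) F) :=
  {f' | ∃ g, IsUT g ∧ f' = coadj g f}

/-- `Ω` is a coadjoint orbit. -/
def IsCoadjOrbit (F : Type) [Field F] (n : ℕ) (Ω : Set (Matrix (Fin n) (Fin n) F)) : Prop :=
  ∃ f, IsSU f ∧ Ω = coadjOrbit F n f

/-- `exp a = ∑_{k=0}^{n-1} a^k / k!`. -/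
noncomputable def expM [Field F] {n : ℕ} (a : Matrix (Fin n) (Fin n) F) :
    Matrix (Fin n) (Fin n) F :=
  ∑ k ∈ Finset.range n, (k.factorial : F)⁻¹ • a ^ k

/-- Sum of `ψ` over a (finite) set of matrices. -/
noncomputable def osum [Field F] [Fintype F] {n : ℕ} (Ω : Set (Matrix (Fin n) (Fin n) F))
    (ψ : Matrix (Fin n) (Fin n) F → ℂ) : ℂ :=
  ∑ f ∈ (Set.toFinite Ω).toFinset, ψ f

/-- The minor `Δ^X(g)`: rows are the first coordinates of `X`, columns the second coordinates,
each listed in increasing order. -/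
noncomputable def minor [CommRing F] {n : ℕ} (g : Matrix (Fin n) (Fin n) F)
    (X : Finset (ℕ × ℕ)) : F :=
  if h : (X.image Prod.snd).card = (X.image Prod.fst).card then
    Matrix.det (Matrix.of fun a b : Fin (X.image Prod.fst).card =>
      ent g ((X.image Prod.fst).orderIsoOfFin rfl a).1
        ((X.image Prod.snd).orderIsoOfFin h b).1)
  else 0

/-- `R_D(i,j) = {(i,j)} ∪ {(k,l) ∈ D : l > j and k < i}`. -/
def RDpairs (D : Finset (ℕ × ℕ)) (i j : ℕ) : Finset (ℕ × ℕ) :=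
  insert (i, j) (D.filter fun s => j < s.2 ∧ s.1 < i)

/-- `Δ_{ij}(g) = Δ^{R_D(i,j)}(g)`. -/
noncomputable def Del [CommRing F] {n : ℕ} (D : Finset (ℕ × ℕ)) (i j : ℕ)
    (g : Matrix (Fin n) (Fin n) F) : F :=
  minor g (RDpairs D i j)

/-- `D⁺ = {(i,j) ∈ D : d < j < n - d}`. -/
def Dplus (n d : ℕ) (D : Finset (ℕ × ℕ)) : Finset (ℕ × ℕ) :=
  D.filter fun r => d < r.2 ∧ r.2 < n - d

/-- `D⁻ = {(i,j) ∈ D : j < d}`. -/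
def Dminus (d : ℕ) (D : Finset (ℕ × ℕ)) : Finset (ℕ × ℕ) :=
  D.filter fun r => r.2 < d

/-- `D′ = D⁻ ∪ D⁺`. -/
def Dprime (n d : ℕ) (D : Finset (ℕ × ℕ)) : Finset (ℕ × ℕ) :=
  Dminus d D ∪ Dplus n d D

/-- `D″ = D \ {(n-d,d), (n-d+1,d+1)}`. -/
def Dsec (n d : ℕ) (D : Finset (ℕ × ℕ)) : Finset (ℕ × ℕ) :=
  D \ {(n - d, d), (n - d + 1, d + 1)}

/-- `m = max {j : (i,j) ∈ D⁺}`. -/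
def mmax (n d : ℕ) (D : Finset (ℕ × ℕ)) : ℕ := (Dplus n d D).sup Prod.snd

/-- `α_{ij}(g) = ∑_{l=n-m+1}^{n-d} y_{n-d+1,l} y_{l,j}`. -/
def alphaP [CommRing F] {n : ℕ} (n' d m j : ℕ) (g : Matrix (Fin n) (Fin n) F) : F :=
  ∑ l ∈ Finset.Icc (n' - m + 1) (n' - d), ent g (n' - d + 1) l * ent g l j

/-- `β_{ij}(g) = ∑_{l=d+1}^{m} y_{i,l} y_{l,d}`. -/
def betaP [CommRing F] {n : ℕ} (d m i : ℕ) (g : Matrix (Fin n) (Fin n) F) : F :=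
  ∑ l ∈ Finset.Icc (d + 1) m, ent g i l * ent g l d

/-- `γ(g) = ∑_{l=d+1}^{n-d} y_{n-d+1,l} y_{l,d}`. -/
def gammaP [CommRing F] {n : ℕ} (n' d : ℕ) (g : Matrix (Fin n) (Fin n) F) : F :=
  ∑ l ∈ Finset.Icc (d + 1) (n' - d), ent g (n' - d + 1) l * ent g l d

/-- The variety `V(J)` cut out by the equations (sreg_uravn) with given scalars. -/
noncomputable def VJ (F : Type) [Field F] (n d : ℕ) (D : Finset (ℕ × ℕ))
    (c0 ca cb : F) (c : ℕ × ℕ → F) : Set (Matrix (Fin n) (Fin n) F) :=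
  {g | IsUT g ∧ ent g (n - d + 1) (n - d) = ca ∧ ent g (d + 1) d = cb ∧
    gammaP n d g = c0 ∧
    (∀ r ∈ Dplus n d D,
      alphaP n d (mmax n d D) r.2 g = 0 ∧ betaP d (mmax n d D) r.1 g = 0) ∧
    (∀ r ∈ Dprime n d D, Del (Dsec n d D) r.1 r.2 g = c r) ∧
    (∀ r ∈ RD n (Dsec n d D) \ Dprime n d D, Del (Dsec n d D) r.1 r.2 g = 0)}

/-- The possibilities for `D_0(d)`. -/
def IsD0 (n d : ℕ) (E : Finset (ℕ × ℕ)) : Prop :=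
  E = ∅ ∨ E = {(n - d + 1, d)} ∨ E = {(n - d, d)} ∨ E = {(n - d + 1, d + 1)} ∨
    E = {(n - d, d), (n - d + 1, d + 1)}

/-- The possibilities for `D_1(d)`. -/
def IsD1 (n d : ℕ) (E : Finset (ℕ × ℕ)) : Prop :=
  E = {(d + 1, d), (n - d + 1, n - d)} ∨
    E = {(d + 1, d), (n - d + 1, n - d), (n - d, d), (n - d + 1, d + 1)}

/-- `D` is a `d`-subregular subset formed with some `D_0(d)`. -/
def IsSubregSet0 (n d : ℕ) (D : Finset (ℕ × ℕ)) : Prop :=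
  ∃ D' E, IsD0 n d E ∧ IsRegularSet n D' ∧ (n - d + 1, d) ∉ D' ∧
    (n - d + 1, d + 1) ∉ D' ∧ D = D' ∪ E

/-- `D` is a `d`-subregular subset with `D ⊇ D_1(d)`. -/
def IsSubregSet1 (n d : ℕ) (D : Finset (ℕ × ℕ)) : Prop :=
  ∃ D' E, IsD1 n d E ∧ IsRegularSet n D' ∧ (n - d + 1, d) ∉ D' ∧
    (n - d + 1, d + 1) ∉ D' ∧ D = D' ∪ E

/-- `D` is a `d`-subregular subset. -/
def IsSubregSet (n d : ℕ) (D : Finset (ℕ × ℕ)) : Prop :=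
  IsSubregSet0 n d D ∨ IsSubregSet1 n d D

/-- `Φ_d = {(i,j) ∈ Φ(n) : i > n-j+1, j ∉ {d, n-d}, i ∉ {n-d+1, n-d}}`. -/
def PhiD (n d : ℕ) : Finset (ℕ × ℕ) :=
  (Phi n).filter fun r =>
    n - r.2 + 1 < r.1 ∧ r.2 ≠ d ∧ r.2 ≠ n - d ∧ r.1 ≠ n - d + 1 ∧ r.1 ≠ n - d

/-- `m_D` for a `d`-subregular subset formed with `D_0(d)`. -/
def mD0 (n : ℕ) (D : Finset (ℕ × ℕ)) : ℕ := (RD n D ∩ PhiReg n).card - 1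

/-- `m_D` for a `d`-subregular subset containing `D_1(d)`. -/
def mD1 (n d : ℕ) (D : Finset (ℕ × ℕ)) : ℕ := (RD n D ∩ PhiD n d).card + n - 2 * d - 1

/-- `m_D` for a regular subset. -/
def mDreg (n : ℕ) (D : Finset (ℕ × ℕ)) : ℕ := (RD n D ∩ PhiReg n).card

/-- `f` is a canonical form of a regular orbit. -/
def IsRegCanon [CommRing F] (n : ℕ) (f : Matrix (Fin n) (Fin n) F) : Prop :=
  IsSU f ∧
  (∀ i j : ℕ, 1 ≤ i → i ≤ n → 1 ≤ j → j ≤ n → ent f i j ≠ 0 →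
    i ≤ n / 2 ∧ j = n - i + 1) ∧
  (∀ d : ℕ, 1 ≤ d → d ≤ n / 2 - 1 → ent f d (n - d + 1) ≠ 0) ∧
  (Odd n → ent f (n / 2) (n - n / 2 + 1) ≠ 0)

/-- `f` is a canonical form of a `d`-subregular orbit (first type), `1 ≤ d < n₁`. -/
def IsSubregCanon1 [CommRing F] (n d : ℕ) (f : Matrix (Fin n) (Fin n) F) : Prop :=
  IsSU f ∧
  (∀ j : ℕ, 1 ≤ j → j ≤ d - 1 → ent f j (n - j + 1) ≠ 0) ∧
  (∀ j : ℕ, d + 2 ≤ j → j ≤ n / 2 - 1 → ent f j (n - j + 1) ≠ 0) ∧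
  (Odd n → d + 2 ≤ n / 2 → ent f (n / 2) (n - n / 2 + 1) ≠ 0) ∧
  ent f d (n - d) ≠ 0 ∧ ent f (d + 1) (n - d + 1) ≠ 0 ∧
  (∀ i j : ℕ, 1 ≤ i → i ≤ n → 1 ≤ j → j ≤ n → ent f i j ≠ 0 →
    (j = n - i + 1 ∧ (i ≤ d - 1 ∨ (d + 2 ≤ i ∧ i ≤ n / 2))) ∨
    (i, j) = (d, n - d) ∨ (i, j) = (d + 1, n - d + 1) ∨ (i, j) = (n - d, n - d + 1))

/-- `f` is a canonical form of a subregular orbit of the second type (`n` odd). -/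
def IsSubregCanon2 [CommRing F] (n : ℕ) (f : Matrix (Fin n) (Fin n) F) : Prop :=
  IsSU f ∧
  (∀ j : ℕ, 1 ≤ j → j ≤ (n - 1) / 2 - 1 → ent f j (n - j + 1) ≠ 0) ∧
  (∀ i j : ℕ, 1 ≤ i → i ≤ n → 1 ≤ j → j ≤ n → ent f i j ≠ 0 →
    (j = n - i + 1 ∧ i ≤ (n - 1) / 2 - 1) ∨
    (i, j) = ((n - 1) / 2, n / 2 + 1) ∨ (i, j) = ((n - 1) / 2 + 1, n / 2 + 2))

/-- `f` is a canonical form of a subregular orbit of the third type (`n` even). -/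
def IsSubregCanon3 [CommRing F] (n : ℕ) (f : Matrix (Fin n) (Fin n) F) : Prop :=
  IsSU f ∧
  (∀ j : ℕ, 1 ≤ j → j ≤ (n - 1) / 2 - 1 → ent f j (n - j + 1) ≠ 0) ∧
  ((ent f ((n - 1) / 2) (n / 2 + 1) ≠ 0 ∧
     ∀ i j : ℕ, 1 ≤ i → i ≤ n → 1 ≤ j → j ≤ n → ent f i j ≠ 0 →
       (j = n - i + 1 ∧ i ≤ (n - 1) / 2 - 1) ∨
       (i, j) = ((n - 1) / 2, n / 2 + 1) ∨ (i, j) = ((n - 1) / 2 + 1, n / 2 + 2) ∨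
       (i, j) = ((n - 1) / 2 + 2, n / 2 + 2)) ∨
   (ent f ((n - 1) / 2 + 1) (n / 2 + 2) ≠ 0 ∧
     ∀ i j : ℕ, 1 ≤ i → i ≤ n → 1 ≤ j → j ≤ n → ent f i j ≠ 0 →
       (j = n - i + 1 ∧ i ≤ (n - 1) / 2 - 1) ∨
       (i, j) = ((n - 1) / 2, n / 2) ∨ (i, j) = ((n - 1) / 2 + 1, n / 2 + 2)))

/-- `f` is a canonical form of a subregular orbit (of any type). -/
def IsSubregCanon (F : Type) [CommRing F] (n : ℕ) (f : Matrix (Fin n) (Fin n) F) : Prop :=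
  (∃ d, 1 ≤ d ∧ d < (n - 1) / 2 ∧ IsSubregCanon1 n d f) ∨
  (Odd n ∧ IsSubregCanon2 n f) ∨
  (Even n ∧ IsSubregCanon3 n f)

/-- The admissibility condition (dop_usl) on `φ`. -/
def admissible [CommRing F] (n d : ℕ) (D : Finset (ℕ × ℕ))
    (f : Matrix (Fin n) (Fin n) F) (φ : ℕ × ℕ → F) : Prop :=
  ({(d + 1, d), (n - d + 1, n - d)} : Finset (ℕ × ℕ)) ⊆ D →
    ent f d (n - d) * φ (d + 1, d) = ent f (d + 1) (n - d + 1) * φ (n - d + 1, n - d)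

/-- `K_f`: the union of the classes `K_D(φ)` over `d`-subregular `D` and admissible `φ`. -/
def Kf (F : Type) [Field F] (n d : ℕ) (f : Matrix (Fin n) (Fin n) F) :
    Set (Matrix (Fin n) (Fin n) F) :=
  {g | ∃ D φ, IsSubregSet n d D ∧ (∀ r ∈ D, φ r ≠ 0) ∧ admissible n d D f φ ∧
    g ∈ KD F n D φ}

/-- `K_reg`: the union of the classes `K_D(φ)` over regular subsets `D`. -/
def Kreg (F : Type) [Field F] (n : ℕ) : Set (Matrix (Fin n) (Fin n) F) :=
  {g | ∃ D φ, IsRegularSet n D ∧ (∀ r ∈ D, φ r ≠ 0) ∧ g ∈ KD F n D φ}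

/-- `Φ_ξ` for `ξ = (i,j)`: the roots in column `i` or row `j`. -/
def PhiXi (n : ℕ) (ξ : ℕ × ℕ) : Finset (ℕ × ℕ) :=
  (Phi n).filter fun r => r.2 = ξ.1 ∨ r.1 = ξ.2

/-- `Φ_δ = (⋃_{ξ ∈ D} Φ_ξ) ∩ (R(D) \ D)`. -/
def PhiDelta (n : ℕ) (D : Finset (ℕ × ℕ)) : Finset (ℕ × ℕ) :=
  (D.biUnion (PhiXi n)) ∩ (RD n D \ D)

/-- The set `A = Φ_α ⊔ Φ̃_α ⊔ Φ_β ⊔ Φ̃_β ⊔ Φ_γ ⊔ Φ_δ`. -/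
def Aset (n d : ℕ) (D : Finset (ℕ × ℕ)) : Finset (ℕ × ℕ) :=
  ((Dplus n d D).image fun r => (n - d + 1, r.1)) ∪
  ((Finset.Ico 1 d).image fun j => (n - d + 1, j)) ∪
  ((Dplus n d D).image fun r => (r.1, d + 1)) ∪
  ((Finset.Ioc (n - d + 1) n).image fun i => (i, d)) ∪
  {(n - d, d)} ∪ PhiDelta n D

/-- `Δ_d(g)`: the minor of `g` with rows `n-d+1, …, n` and columns `1, …, d`. -/
def Deltad [CommRing F] {n : ℕ} (n' d : ℕ) (g : Matrix (Fin n) (Fin n) F) : F :=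
  Matrix.det (Matrix.of fun a b : Fin d => ent g (n' - d + 1 + a.1) (1 + b.1))

/-- The set `{a ∈ g_n^* : Δ_d(ᵗa) = β_d, 1 ≤ d ≤ n₀}`. -/
def regOrbitSet (F : Type) [CommRing F] (n : ℕ) (β : ℕ → F) :
    Set (Matrix (Fin n) (Fin n) F) :=
  {a | IsSU a ∧ ∀ d, 1 ≤ d → d ≤ n / 2 → Deltad n d aᵀ = β d}

/-- The characteristic matrix `M(t)` of `g`. -/
noncomputable def charM [CommRing F] {n : ℕ} (g : Matrix (Fin n) (Fin n) F) :
    Matrix (Fin n) (Fin n) (Polynomial F) :=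
  Matrix.of fun a b =>
    if a = b then 1 else if b < a then Polynomial.C (g a b) * Polynomial.X else 0

/-- `M^X(t^k, g)`: the coefficient of `t^k` in the minor `Δ^X` of the characteristic matrix. -/
noncomputable def Mcoef [CommRing F] {n : ℕ} (X : Finset (ℕ × ℕ)) (k : ℕ)
    (g : Matrix (Fin n) (Fin n) F) : F :=
  (minor (charM g) X).coeff k

/-- The generic lower unitriangular matrix, with entries in the polynomial ring
`K[y_{ij} : (i,j) ∈ Φ(n)]`. -/
noncomputable def genM (K : Type) [CommRing K] (n : ℕ) :
    Matrix (Fin n) (Fin n) (MvPolynomial {ρ : ℕ × ℕ // ρ ∈ Phi n} K) :=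
  Matrix.of fun a b =>
    if h : (a.1 + 1, b.1 + 1) ∈ Phi n then MvPolynomial.X ⟨(a.1 + 1, b.1 + 1), h⟩
    else if a = b then 1 else 0

/-- The generators of the ideal `J`. -/
noncomputable def Jgens (K : Type) [CommRing K] (n d : ℕ) (D : Finset (ℕ × ℕ))
    (c0 ca cb : K) (c : ℕ × ℕ → K) : Set (MvPolynomial {ρ : ℕ × ℕ // ρ ∈ Phi n} K) :=
  {ent (genM K n) (n - d + 1) (n - d) - MvPolynomial.C ca,
   ent (genM K n) (d + 1) d - MvPolynomial.C cb,
   gammaP n d (genM K n) - MvPolynomial.C c0} ∪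
  (fun ρ : ℕ × ℕ => alphaP n d (mmax n d D) ρ.2 (genM K n)) ''
    (↑(Dplus n d D) : Set (ℕ × ℕ)) ∪
  (fun ρ : ℕ × ℕ => betaP d (mmax n d D) ρ.1 (genM K n)) ''
    (↑(Dplus n d D) : Set (ℕ × ℕ)) ∪
  (fun ρ : ℕ × ℕ => Del (Dsec n d D) ρ.1 ρ.2 (genM K n) - MvPolynomial.C (c ρ)) ''
    (↑(Dprime n d D) : Set (ℕ × ℕ)) ∪
  (fun ρ : ℕ × ℕ => Del (Dsec n d D) ρ.1 ρ.2 (genM K n)) ''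
    (↑(RD n (Dsec n d D) \ Dprime n d D) : Set (ℕ × ℕ))

/-- `χ` is the character of an irreducible complex representation of `G_n` of dimension `m`. -/
def IsIrredCharUT [CommRing F] (n m : ℕ) (χ : Matrix (Fin n) (Fin n) F → ℂ) : Prop :=
  0 < m ∧
  ∃ ρ : Matrix (Fin n) (Fin n) F → ((Fin m → ℂ) →ₗ[ℂ] (Fin m → ℂ)),
    ρ 1 = LinearMap.id ∧
    (∀ g h, IsUT g → IsUT h → ρ (g * h) = ρ g ∘ₗ ρ h) ∧
    (∀ U : Submodule ℂ (Fin m → ℂ), (∀ g, IsUT g → ∀ v ∈ U, ρ g v ∈ U) → U = ⊥ ∨ U = ⊤) ∧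
    (∀ g, IsUT g → χ g = LinearMap.trace ℂ (Fin m → ℂ) (ρ g))


section Aux
variable [Field F] {n : ℕ}

/-- elementary matrix `t·e_{ab}`. -/
def Em (n : ℕ) (a b : Fin n) (t : F) : Matrix (Fin n) (Fin n) F :=
  Matrix.of fun i j => if i = a ∧ j = b then t else 0

lemma Em_mul (a b : Fin n) (t : F) (M : Matrix (Fin n) (Fin n) F) (i j : Fin n) :
    (Em n a b t * M) i j = if i = a then t * M b j else 0 := by
  rw [Matrix.mul_apply]
  by_cases h : i = a
  · subst h
    simp [Em]
  · simp [Em, h]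

lemma mul_Em (a b : Fin n) (t : F) (M : Matrix (Fin n) (Fin n) F) (i j : Fin n) :
    (M * Em n a b t) i j = if j = b then M i a * t else 0 := by
  rw [Matrix.mul_apply]
  by_cases h : j = b
  · subst h
    simp [Em]
  · simp [Em, h]

lemma Em_mul_Em (a b : Fin n) (t s : F) (hab : a ≠ b) :
    Em n a b t * Em n a b s = 0 := by
  ext i j
  rw [Em_mul]
  by_cases h : i = a
  · simp [Em, h, Ne.symm hab, hab]
  · simp [h]

lemma isUT_mul {g h : Matrix (Fin n) (Fin n) F} (hg : IsUT g) (hh : IsUT h) :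
    IsUT (g * h) := by
  constructor
  · intro i
    rw [Matrix.mul_apply, Finset.sum_eq_single i]
    · rw [hg.1, hh.1, one_mul]
    · intro k _ hk
      rcases lt_or_gt_of_ne hk with h' | h'
      · rw [hh.2 k i h', mul_zero]
      · rw [hg.2 i k h', zero_mul]
    · simp
  · intro i j hij
    rw [Matrix.mul_apply]
    apply Finset.sum_eq_zero
    intro k _
    rcases lt_or_ge i k with h' | h'
    · rw [hg.2 i k h', zero_mul]
    · rw [hh.2 k j (lt_of_le_of_lt h' hij), mul_zero]

lemma isUT_one_add_Em (a b : Fin n) (t : F) (hba : b < a) :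
    IsUT (1 + Em n a b t) := by
  constructor
  · intro i
    have : ¬(i = a ∧ i = b) := by rintro ⟨rfl, rfl⟩; exact absurd hba (lt_irrefl _)
    simp [Em, Matrix.one_apply, this]
  · intro i j hij
    have h1 : ¬(i = a ∧ j = b) := by
      rintro ⟨rfl, rfl⟩; exact absurd hij (not_lt.2 hba.le)
    simp [Em, Matrix.one_apply, h1, Fin.ne_of_lt hij]

lemma isUT_one_sub_Em (a b : Fin n) (t : F) (hba : b < a) :
    IsUT (1 - Em n a b t) := by
  have he : (1 : Matrix (Fin n) (Fin n) F) - Em n a b t = 1 + Em n a b (-t) := by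
    ext i j
    simp only [Matrix.sub_apply, Matrix.add_apply, Em, Matrix.of_apply]
    split <;> ring
  rw [he]
  exact isUT_one_add_Em a b (-t) hba

lemma one_add_Em_mul_one_sub_Em (a b : Fin n) (t : F) (hab : a ≠ b) :
    (1 + Em n a b t) * (1 - Em n a b t) = 1 := by
  have h := Em_mul_Em a b t t hab
  rw [mul_sub, mul_one, add_mul, one_mul, h]
  abel

lemma one_sub_Em_mul_one_add_Em (a b : Fin n) (t : F) (hab : a ≠ b) :
    (1 - Em n a b t) * (1 + Em n a b t) = 1 := by
  have h := Em_mul_Em a b t t hab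
  rw [sub_mul, one_mul, mul_add, mul_one, h]
  abel

lemma trace_mul_Em (f : Matrix (Fin n) (Fin n) F) (a b : Fin n) (t : F) :
    Matrix.trace (f * Em n a b t) = f b a * t := by
  rw [Matrix.trace]
  rw [Finset.sum_eq_single b]
  · simp [Matrix.diag, mul_Em]
  · intro k _ hk
    simp [Matrix.diag, mul_Em, hk]
  · simp

end Aux

/-- Remark 2.10: if `φ` and `φ̃` agree outside `{(n-d,d), (n-d+1,d+1)}`
and satisfy the quadratic relation, then `K_D(φ) = K_D(φ̃)` and the corresponding character
values coincide. -/
theorem class_and_value_well_defined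
    (F : Type) [Field F] [Fintype F] (n p r d : ℕ)
    (hp : p.Prime) (hr : 0 < r) (hpn : n ≤ p) (hcard : Fintype.card F = p ^ r)
    (θ : AddChar F ℂ) (hθ : ∃ a, θ a ≠ 1)
    (hd : 1 ≤ d) (hd' : d < (n - 1) / 2)
    (D : Finset (ℕ × ℕ)) (hD : IsSubregSet1 n d D)
    (φ φ' : ℕ × ℕ → F) (hφ : ∀ ρ ∈ D, φ ρ ≠ 0) (hφ' : ∀ ρ ∈ D, φ' ρ ≠ 0)
    (hagree : ∀ ρ ∈ D, ρ ≠ (n - d, d) → ρ ≠ (n - d + 1, d + 1) → φ ρ = φ' ρ)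
    (heq :
      (fun ρ => if ρ ∈ D then φ ρ else 0) (d + 1, d) *
          (fun ρ => if ρ ∈ D then φ ρ else 0) (n - d + 1, d + 1) +
        (fun ρ => if ρ ∈ D then φ ρ else 0) (n - d, d) *
          (fun ρ => if ρ ∈ D then φ ρ else 0) (n - d + 1, n - d) =
      (fun ρ => if ρ ∈ D then φ' ρ else 0) (d + 1, d) *
          (fun ρ => if ρ ∈ D then φ' ρ else 0) (n - d + 1, d + 1) +
        (fun ρ => if ρ ∈ D then φ' ρ else 0) (n - d, d) *
          (fun ρ => if ρ ∈ D then φ' ρ else 0) (n - d + 1, n - d)) :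
    KD F n D φ = KD F n D φ' ∧
    ∀ f : Matrix (Fin n) (Fin n) F, IsSubregCanon1 n d f →
      ent f d (n - d) * φ (d + 1, d) = ent f (d + 1) (n - d + 1) * φ (n - d + 1, n - d) →
      θ (Matrix.trace (f * eD n D φ)) = θ (Matrix.trace (f * eD n D φ')) := by
  obtain ⟨D', E, hE, ⟨hsub, hform⟩, hnd1, hnd2, rfl⟩ := hD
  have hn : 2 * d + 3 ≤ n := by omega
  have hPhi : ∀ ρ ∈ D', ρ.2 < ρ.1 ∧ 1 ≤ ρ.2 ∧ ρ.1 ≤ n ∧ 1 ≤ ρ.1 ∧ ρ.2 ≤ n := by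
    intro ρ hρ
    have := hsub hρ
    simp only [Phi, Finset.mem_filter, Finset.mem_product, Finset.mem_Icc] at this
    tauto
  rcases hE with hE | hE
  · -- two-element case: the two special roots are not in D, so φ = φ' on D
    have hs1 : (n - d, d) ∉ D' ∪ E := by
      rw [Finset.mem_union]
      rintro (h | h)
      · have h1 : n - d = n - d + 1 := hform _ h
        omega
      · rw [hE] at h
        simp only [Finset.mem_insert, Finset.mem_singleton, Prod.mk.injEq] at h
        omega
    have hs2 : (n - d + 1, d + 1) ∉ D' ∪ E := by
      rw [Finset.mem_union]
      rintro (h | h)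
      · have h1 : n - d + 1 = n - (d + 1) + 1 := hform _ h
        omega
      · rw [hE] at h
        simp only [Finset.mem_insert, Finset.mem_singleton, Prod.mk.injEq] at h
        omega
    have hall : ∀ ρ ∈ D' ∪ E, φ ρ = φ' ρ := by
      intro ρ hρ
      exact hagree ρ hρ (by rintro rfl; exact hs1 hρ) (by rintro rfl; exact hs2 hρ)
    have hx : xD n (D' ∪ E) φ = xD n (D' ∪ E) φ' := by
      ext i j
      simp only [xD, Matrix.of_apply]
      split_ifs with h1 h2
      · rfl
      · exact hall _ h2
      · rfl
    refine ⟨by unfold KD; rw [hx], ?_⟩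
    intro f _ _
    have he : eD n (D' ∪ E) φ = eD n (D' ∪ E) φ' := by unfold eD; rw [hx]
    rw [he]
  · -- four-element case
    have hm1 : (d + 1, d) ∈ D' ∪ E := by simp [hE]
    have hm2 : (n - d + 1, n - d) ∈ D' ∪ E := by simp [hE]
    have hm3 : (n - d, d) ∈ D' ∪ E := by simp [hE]
    have hm4 : (n - d + 1, d + 1) ∈ D' ∪ E := by simp [hE]
    obtain ⟨a0, ha0v⟩ : ∃ x : Fin n, (x : ℕ) = n - d - 1 := ⟨⟨n - d - 1, by omega⟩, rfl⟩
    obtain ⟨b0, hb0v⟩ : ∃ x : Fin n, (x : ℕ) = d := ⟨⟨d, by omega⟩, rfl⟩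
    obtain ⟨i1, hi1v⟩ : ∃ x : Fin n, (x : ℕ) = d - 1 := ⟨⟨d - 1, by omega⟩, rfl⟩
    obtain ⟨i4, hi4v⟩ : ∃ x : Fin n, (x : ℕ) = n - d := ⟨⟨n - d, by omega⟩, rfl⟩
    have hne_fin : ∀ x y : Fin n, (x : ℕ) ≠ (y : ℕ) → x ≠ y :=
      fun x y h h' => h (congrArg Fin.val h')
    have hne_a0b0 : a0 ≠ b0 := hne_fin _ _ (by simp only [ha0v, hb0v]; omega)
    have hne_b0i1 : b0 ≠ i1 := hne_fin _ _ (by simp only [hb0v, hi1v]; omega)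
    have hne_a0i1 : a0 ≠ i1 := hne_fin _ _ (by simp only [ha0v, hi1v]; omega)
    have hne_i4b0 : i4 ≠ b0 := hne_fin _ _ (by simp only [hi4v, hb0v]; omega)
    have hne_i4a0 : i4 ≠ a0 := hne_fin _ _ (by simp only [hi4v, ha0v]; omega)
    have hlt : b0 < a0 := by rw [Fin.lt_def]; simp only [ha0v, hb0v]; omega
    have haφ : φ (d + 1, d) = φ' (d + 1, d) :=
      hagree _ hm1 (by intro hc; rw [Prod.mk.injEq] at hc; omega)
        (by intro hc; rw [Prod.mk.injEq] at hc; omega)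
    have hbφ : φ (n - d + 1, n - d) = φ' (n - d + 1, n - d) :=
      hagree _ hm2 (by intro hc; rw [Prod.mk.injEq] at hc; omega)
        (by intro hc; rw [Prod.mk.injEq] at hc; omega)
    have ha : φ (d + 1, d) ≠ 0 := hφ _ hm1
    simp only [if_pos hm1, if_pos hm2, if_pos hm3, if_pos hm4] at heq
    rw [← haφ, ← hbφ] at heq
    obtain ⟨t, ht⟩ : ∃ t : F, t = (φ' (n - d, d) - φ (n - d, d)) * (φ (d + 1, d))⁻¹ :=
      ⟨_, rfl⟩
    have hta : t * φ (d + 1, d) = φ' (n - d, d) - φ (n - d, d) := by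
      rw [ht, mul_assoc, inv_mul_cancel₀ ha, mul_one]
    have hkey1 : φ (n - d, d) + t * φ (d + 1, d) = φ' (n - d, d) := by
      rw [hta]; ring
    have hkey2 : φ (n - d + 1, d + 1) = φ' (n - d + 1, d + 1) + t * φ (n - d + 1, n - d) := by
      apply mul_left_cancel₀ ha
      linear_combination heq - φ (n - d + 1, n - d) * hta
    -- membership characterizations
    have hrow_d1 : ∀ j : ℕ, (d + 1, j) ∈ D' ∪ E → j = d := by
      intro j hj
      rcases Finset.mem_union.1 hj with h | h
      · have h1 : d + 1 = n - j + 1 := hform _ h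
        have h2 : j < d + 1 ∧ 1 ≤ j ∧ d + 1 ≤ n ∧ 1 ≤ d + 1 ∧ j ≤ n := hPhi _ h
        omega
      · rw [hE] at h
        simp only [Finset.mem_insert, Finset.mem_singleton, Prod.mk.injEq] at h
        omega
    have hcol_nd : ∀ i : ℕ, (i, n - d) ∈ D' ∪ E → i = n - d + 1 := by
      intro i hi
      rcases Finset.mem_union.1 hi with h | h
      · have h1 : i = n - (n - d) + 1 := hform _ h
        have h2 : n - d < i ∧ 1 ≤ n - d ∧ i ≤ n ∧ 1 ≤ i ∧ n - d ≤ n := hPhi _ h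
        omega
      · rw [hE] at h
        simp only [Finset.mem_insert, Finset.mem_singleton, Prod.mk.injEq] at h
        omega
    -- entry lemmas
    have hx_diag : ∀ (ψ : ℕ × ℕ → F) (i : Fin n), xD n (D' ∪ E) ψ i i = 1 := by
      intro ψ i; simp [xD]
    have hx_off : ∀ (ψ : ℕ × ℕ → F) (i j : Fin n), i ≠ j →
        xD n (D' ∪ E) ψ i j =
          if ((i : ℕ) + 1, (j : ℕ) + 1) ∈ D' ∪ E then ψ ((i : ℕ) + 1, (j : ℕ) + 1) else 0 := by
      intro ψ i j hij
      simp [xD, hij]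
    have hgen : ∀ i j : Fin n, (i ≠ a0 ∨ j ≠ i1) → (i ≠ i4 ∨ j ≠ b0) →
        xD n (D' ∪ E) φ i j = xD n (D' ∪ E) φ' i j := by
      intro i j h1 h2
      by_cases hij : i = j
      · subst hij; rw [hx_diag, hx_diag]
      · rw [hx_off φ _ _ hij, hx_off φ' _ _ hij]
        split_ifs with hm
        · refine hagree _ hm ?_ ?_
          · intro hc
            rw [Prod.mk.injEq] at hc
            rcases h1 with h1 | h1
            · exact h1 (Fin.ext (by rw [ha0v]; omega))
            · exact h1 (Fin.ext (by rw [hi1v]; omega))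
          · intro hc
            rw [Prod.mk.injEq] at hc
            rcases h2 with h2 | h2
            · exact h2 (Fin.ext (by rw [hi4v]; omega))
            · exact h2 (Fin.ext (by rw [hb0v]; omega))
        · rfl
    have hrow0 : ∀ j : Fin n, j ≠ b0 → j ≠ i1 → xD n (D' ∪ E) φ b0 j = 0 := by
      intro j hjb hji
      rw [hx_off φ _ _ (Ne.symm hjb), if_neg]
      intro hm
      rw [hb0v] at hm
      have hj := hrow_d1 _ hm
      exact hji (Fin.ext (by rw [hi1v]; omega))
    have hcol0 : ∀ i : Fin n, i ≠ a0 → i ≠ i4 → xD n (D' ∪ E) φ' i a0 = 0 := by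
      intro i hia hii
      rw [hx_off φ' _ _ hia, if_neg]
      intro hm
      rw [ha0v, show n - d - 1 + 1 = n - d from by omega] at hm
      have hi := hcol_nd _ hm
      exact hii (Fin.ext (by rw [hi4v]; omega))
    -- pair computations and specific entries
    have hp_a : (((b0 : ℕ)) + 1, ((i1 : ℕ)) + 1) = (d + 1, d) := by
      simp only [Prod.mk.injEq]; exact ⟨by omega, by omega⟩
    have hp_u : (((a0 : ℕ)) + 1, ((i1 : ℕ)) + 1) = (n - d, d) := by
      simp only [Prod.mk.injEq]; exact ⟨by omega, by omega⟩
    have hp_v : (((i4 : ℕ)) + 1, ((b0 : ℕ)) + 1) = (n - d + 1, d + 1) := by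
      simp only [Prod.mk.injEq]; exact ⟨by omega, by omega⟩
    have hp_b : (((i4 : ℕ)) + 1, ((a0 : ℕ)) + 1) = (n - d + 1, n - d) := by
      simp only [Prod.mk.injEq]; exact ⟨by omega, by omega⟩
    have hval_a : xD n (D' ∪ E) φ b0 i1 = φ (d + 1, d) := by
      rw [hx_off φ _ _ hne_b0i1, hp_a, if_pos hm1]
    have hval_u : xD n (D' ∪ E) φ a0 i1 = φ (n - d, d) := by
      rw [hx_off φ _ _ hne_a0i1, hp_u, if_pos hm3]
    have hval_u' : xD n (D' ∪ E) φ' a0 i1 = φ' (n - d, d) := by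
      rw [hx_off φ' _ _ hne_a0i1, hp_u, if_pos hm3]
    have hval_v : xD n (D' ∪ E) φ i4 b0 = φ (n - d + 1, d + 1) := by
      rw [hx_off φ _ _ hne_i4b0, hp_v, if_pos hm4]
    have hval_v' : xD n (D' ∪ E) φ' i4 b0 = φ' (n - d + 1, d + 1) := by
      rw [hx_off φ' _ _ hne_i4b0, hp_v, if_pos hm4]
    have hval_b' : xD n (D' ∪ E) φ' i4 a0 = φ' (n - d + 1, n - d) := by
      rw [hx_off φ' _ _ hne_i4a0, hp_b, if_pos hm2]
    -- the conjugation identity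
    have hhx : (1 + Em n a0 b0 t) * xD n (D' ∪ E) φ =
        xD n (D' ∪ E) φ' * (1 + Em n a0 b0 t) := by
      ext i j
      rw [add_mul, mul_add, one_mul, mul_one, Matrix.add_apply, Matrix.add_apply,
        Em_mul, mul_Em]
      by_cases hia : i = a0
      · by_cases hjb : j = b0
        · rw [hia, hjb, if_pos rfl, if_pos rfl, hx_diag, hx_diag,
            hgen a0 b0 (Or.inr hne_b0i1) (Or.inl (Ne.symm hne_i4a0))]
          ring
        · by_cases hji : j = i1
          · rw [hia, hji, if_pos rfl, if_neg (Ne.symm hne_b0i1),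
              hval_u, hval_a, hval_u', add_zero]
            exact hkey1
          · rw [hia, if_pos rfl, if_neg hjb, hrow0 j hjb hji, mul_zero, add_zero,
              add_zero]
            exact hgen a0 j (Or.inr hji) (Or.inr hjb)
      · rw [if_neg hia, add_zero]
        by_cases hjb : j = b0
        · by_cases hii : i = i4
          · rw [hjb, hii, if_pos rfl, hval_v, hval_v', hval_b', ← hbφ, hkey2]
            ring
          · rw [hjb, if_pos rfl, hcol0 i hia hii, zero_mul, add_zero]
            exact hgen i b0 (Or.inl hia) (Or.inl hii)
        · rw [if_neg hjb, add_zero]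
          exact hgen i j (Or.inl hia) (Or.inr hjb)
    have hEinv : (1 + Em n a0 b0 t)⁻¹ = 1 - Em n a0 b0 t :=
      Matrix.inv_eq_right_inv (one_add_Em_mul_one_sub_Em a0 b0 t hne_a0b0)
    have hEinv' : (1 - Em n a0 b0 t)⁻¹ = 1 + Em n a0 b0 t :=
      Matrix.inv_eq_right_inv (one_sub_Em_mul_one_add_Em a0 b0 t hne_a0b0)
    have hconj1 : (1 + Em n a0 b0 t) * xD n (D' ∪ E) φ * (1 - Em n a0 b0 t) =
        xD n (D' ∪ E) φ' := by
      rw [hhx, Matrix.mul_assoc, one_add_Em_mul_one_sub_Em a0 b0 t hne_a0b0, Matrix.mul_one]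
    have hconj2 : (1 - Em n a0 b0 t) * xD n (D' ∪ E) φ' * (1 + Em n a0 b0 t) =
        xD n (D' ∪ E) φ := by
      rw [← hconj1]
      simp only [← Matrix.mul_assoc]
      rw [one_sub_Em_mul_one_add_Em a0 b0 t hne_a0b0, one_mul, Matrix.mul_assoc,
        one_sub_Em_mul_one_add_Em a0 b0 t hne_a0b0, Matrix.mul_one]
    refine ⟨?_, ?_⟩
    · ext g
      simp only [KD, Set.mem_setOf_eq]
      constructor
      · rintro ⟨hg, k, hk, rfl⟩
        refine ⟨hg, k * (1 - Em n a0 b0 t),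
          isUT_mul hk (isUT_one_sub_Em a0 b0 t hlt), ?_⟩
        rw [Matrix.mul_inv_rev, hEinv', ← hconj2]
        simp only [Matrix.mul_assoc]
      · rintro ⟨hg, k, hk, rfl⟩
        refine ⟨hg, k * (1 + Em n a0 b0 t),
          isUT_mul hk (isUT_one_add_Em a0 b0 t hlt), ?_⟩
        rw [Matrix.mul_inv_rev, hEinv, ← hconj1]
        simp only [Matrix.mul_assoc]
    · intro f _ hf
      suffices hsuff : Matrix.trace (f * eD n (D' ∪ E) φ) =
          Matrix.trace (f * eD n (D' ∪ E) φ') by rw [hsuff]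
      have hediff : eD n (D' ∪ E) φ = eD n (D' ∪ E) φ' +
          (Em n a0 i1 (φ (n - d, d) - φ' (n - d, d)) +
           Em n i4 b0 (φ (n - d + 1, d + 1) - φ' (n - d + 1, d + 1))) := by
        ext i j
        simp only [eD, Matrix.sub_apply, Matrix.add_apply, Em, Matrix.of_apply]
        by_cases h1 : i = a0 ∧ j = i1
        · obtain ⟨rfl, rfl⟩ := h1
          rw [if_pos ⟨rfl, rfl⟩, if_neg (by rintro ⟨h, -⟩; exact hne_i4a0 h.symm),
            hval_u, hval_u']
          ring
        · by_cases h2 : i = i4 ∧ j = b0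
          · obtain ⟨rfl, rfl⟩ := h2
            rw [if_neg (by rintro ⟨h, -⟩; exact hne_i4a0 h), if_pos ⟨rfl, rfl⟩,
              hval_v, hval_v']
            ring
          · rw [if_neg h1, if_neg h2, hgen i j (not_and_or.mp h1) (not_and_or.mp h2)]
            ring
      have hA : ent f d (n - d) = f i1 a0 := by
        have h : d - 1 < n ∧ n - d - 1 < n := ⟨by omega, by omega⟩
        have e1 : (⟨d - 1, h.1⟩ : Fin n) = i1 := Fin.ext (by rw [hi1v])
        have e2 : (⟨n - d - 1, h.2⟩ : Fin n) = a0 := Fin.ext (by rw [ha0v])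
        simp only [ent]
        rw [dif_pos h, e1, e2]
      have hB : ent f (d + 1) (n - d + 1) = f b0 i4 := by
        have h : d + 1 - 1 < n ∧ n - d + 1 - 1 < n := ⟨by omega, by omega⟩
        have e1 : (⟨d + 1 - 1, h.1⟩ : Fin n) = b0 :=
          Fin.ext (by rw [hb0v]; show d + 1 - 1 = d; omega)
        have e2 : (⟨n - d + 1 - 1, h.2⟩ : Fin n) = i4 :=
          Fin.ext (by rw [hi4v]; show n - d + 1 - 1 = n - d; omega)
        simp only [ent]
        rw [dif_pos h, e1, e2]
      rw [hA, hB] at hf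
      have hzero : f i1 a0 * (φ (n - d, d) - φ' (n - d, d)) +
          f b0 i4 * (φ (n - d + 1, d + 1) - φ' (n - d + 1, d + 1)) = 0 := by
        linear_combination (f i1 a0) * hkey1 + (f b0 i4) * hkey2 - t * hf
      rw [hediff, Matrix.mul_add, Matrix.mul_add, Matrix.trace_add, Matrix.trace_add,
        trace_mul_Em, trace_mul_Em, hzero, add_zero]


end UT
end

section
/- Let D ⊆ Φ(n) be a nonempty regular subset, let φ: D → F_q^*, let m = max{j : (i,j) ∈ D}, and let g = (y_{ij}) be any element of the conjugacy class K_D(φ) of x_D(φ) in G_n. Then y_{ij} = 0 whenever j > m or i < n−m+1 (for all (i,j) ∈ Φ(n)). -/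
open Matrix

namespace UT

variable {F : Type}

/-- equations (reg_zero): for `g` in the conjugacy class of `x_D(φ)`
with `D` regular and `m = max_{(i,j) ∈ D} j`, one has `y_{ij} = 0` for `j > m` or
`i < n - m + 1`. -/
theorem regular_class_vanishing_entries
    (F : Type) [Field F] [Fintype F] (n p r : ℕ) (hn : 2 ≤ n)
    (hp : p.Prime) (hr : 0 < r) (hpn : n ≤ p) (hcard : Fintype.card F = p ^ r)
    (D : Finset (ℕ × ℕ)) (hD : IsRegularSet n D) (hne : D.Nonempty)
    (φ : ℕ × ℕ → F) (hφ : ∀ ρ ∈ D, φ ρ ≠ 0)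
    (g : Matrix (Fin n) (Fin n) F) (hg : g ∈ KD F n D φ) :
    ∀ ρ ∈ Phi n, D.sup Prod.snd < ρ.2 ∨ ρ.1 < n - D.sup Prod.snd + 1 →
      ent g ρ.1 ρ.2 = 0 := by
  obtain ⟨hgUT, h, hhUT, rfl⟩ := hg
  set m := D.sup Prod.snd with hm
  -- h is lower triangular (block triangular w.r.t. toDual)
  have hBT : h.BlockTriangular OrderDual.toDual := by
    intro i j hij
    exact hhUT.2 i j (by exact_mod_cast hij)
  have hdet : h.det = 1 := by
    rw [Matrix.det_of_lowerTriangular h hBT]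
    simp [hhUT.1]
  haveI : Invertible h := h.invertibleOfIsUnitDet (by rw [hdet]; exact isUnit_one)
  have hinvBT : (h⁻¹).BlockTriangular OrderDual.toDual :=
    Matrix.blockTriangular_inv_of_blockTriangular hBT
  have hinv_zero : ∀ i j : Fin n, i < j → h⁻¹ i j = 0 := by
    intro i j hij
    exact hinvBT (by exact_mod_cast hij)
  have hg1 : h * xD n D φ * h⁻¹ = 1 + h * (xD n D φ - 1) * h⁻¹ := by
    rw [mul_sub, mul_one, sub_mul, Matrix.mul_inv_of_invertible]
    abel
  -- entries of xD - 1
  have hx : ∀ k l : Fin n, (xD n D φ - 1) k l ≠ 0 →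
      l.1 + 1 ≤ m ∧ n - m + 1 ≤ k.1 + 1 := by
    intro k l hkl
    by_cases hkl' : k = l
    · subst hkl'
      simp [xD, Matrix.sub_apply, Matrix.one_apply] at hkl
    · have h1 : (1 : Matrix (Fin n) (Fin n) F) k l = 0 := Matrix.one_apply_ne hkl'
      simp only [Matrix.sub_apply, h1, sub_zero, xD, Matrix.of_apply, if_neg hkl'] at hkl
      have hmem : (k.1 + 1, l.1 + 1) ∈ D := by
        by_contra hc
        simp [hc] at hkl
      have hlm : l.1 + 1 ≤ m := Finset.le_sup (f := Prod.snd) hmem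
      have hreg := hD.2 _ hmem
      simp only at hreg
      refine ⟨hlm, ?_⟩
      rw [hreg]
      have : n - m ≤ n - (l.1 + 1) := Nat.sub_le_sub_left hlm n
      omega
  have key : ∀ a b : Fin n, a ≠ b → (m < b.1 + 1 ∨ a.1 + 1 < n - m + 1) →
      (h * xD n D φ * h⁻¹) a b = 0 := by
    intro a b hab hcond
    rw [hg1, Matrix.add_apply, Matrix.one_apply_ne hab, zero_add, Matrix.mul_apply]
    apply Finset.sum_eq_zero
    intro l _
    by_cases hlb : l < b
    · rw [hinv_zero l b hlb, mul_zero]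
    · have hbl : b ≤ l := not_lt.mp hlb
      have : (h * (xD n D φ - 1)) a l = 0 := by
        rw [Matrix.mul_apply]
        apply Finset.sum_eq_zero
        intro k _
        by_cases hak : a < k
        · rw [hhUT.2 a k hak, zero_mul]
        · have hka : k ≤ a := not_lt.mp hak
          have hz : (xD n D φ - 1) k l = 0 := by
            by_contra hc
            obtain ⟨hl, hk⟩ := hx k l hc
            rcases hcond with hc1 | hc2
            · have : b.1 ≤ l.1 := hbl
              omega
            · have : k.1 ≤ a.1 := hka
              omega
          rw [hz, mul_zero]
      rw [this, zero_mul]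
  intro ρ hρ hcond
  simp only [Phi, Finset.mem_filter, Finset.mem_product, Finset.mem_Icc] at hρ
  obtain ⟨⟨⟨hi1, hin⟩, hj1, hjn⟩, hji⟩ := hρ
  have hi' : ρ.1 - 1 < n := by omega
  have hj' : ρ.2 - 1 < n := by omega
  rw [ent, dif_pos ⟨hi', hj'⟩]
  apply key ⟨ρ.1 - 1, hi'⟩ ⟨ρ.2 - 1, hj'⟩
  · exact Fin.ne_of_val_ne (by simp; omega)
  · simp only []
    omega

end UT
end
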